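/- The reduced graph of the zero-divisor graph of S = P({1,2,3}) × Z/4Z is not isomorphic to the zero-divisor graph G(P(n)) of the power-set semigroup (P([n]), ∩) for any natural number n. -/

import Mathlib

/-- The semigroup carrier: power set of a 3-element set times `ZMod 4`. -/
abbrev S : Type := Finset (Fin 3) × ZMod 4

/-- The componentwise operation `(X,a)*(Y,b) = (X ∩ Y, a*b)`. -/
def mulS (s t : S) : S := (s.1 ∩ t.1, s.2 * t.2)

/-- The zero element `(∅, 0)`. -/
def zeroS : S := (∅, 0)

/-- `s` is a nonzero zero-divisor of `S`. -/
def IsVertex (s : S) : Prop := s ≠ zeroS ∧ ∃ t : S, t ≠ zeroS ∧ mulS s t = zeroS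

/-- The zero-divisor graph `G(S)`. -/
def G : SimpleGraph S where
  Adj s t := s ≠ t ∧ IsVertex s ∧ IsVertex t ∧ mulS s t = zeroS
  symm := by
    constructor
    rintro s t ⟨h1, h2, h3, h4⟩
    refine ⟨h1.symm, h3, h2, ?_⟩
    simpa [mulS, Finset.inter_comm, mul_comm] using h4
  loopless := by constructor; rintro s ⟨h, _⟩; exact h rfl

/-- `u ⟂ v`: adjacent with no common neighbor. -/
def Orth (u v : S) : Prop := G.Adj u v ∧ ∀ w : S, ¬ (G.Adj w u ∧ G.Adj w v)

/-- The setoid on the vertices of `G(S)` given by equality of neighborhoods. -/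
def nsetoid : Setoid {s : S // IsVertex s} :=
  ⟨fun u v => G.neighborSet u.1 = G.neighborSet v.1,
   ⟨fun _ => rfl, Eq.symm, Eq.trans⟩⟩

/-- The reduced graph `G_r(S)`. -/
def Gr : SimpleGraph (Quotient nsetoid) where
  Adj x y := x ≠ y ∧ ∃ u v : {s : S // IsVertex s},
    Quotient.mk nsetoid u = x ∧ Quotient.mk nsetoid v = y ∧ G.Adj u.1 v.1
  symm := by
    constructor
    rintro x y ⟨h1, u, v, hu, hv, huv⟩
    exact ⟨h1.symm, v, u, hv, hu, huv.symm⟩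
  loopless := by constructor; rintro x ⟨h, _⟩; exact h rfl

/-- Vertices of the zero-divisor graph of the power-set semigroup `(P([n]), ∩)`:
the nonzero zero-divisors. -/
def PVtx (n : ℕ) : Type :=
  {X : Finset (Fin n) // X ≠ ∅ ∧ ∃ Y : Finset (Fin n), Y ≠ ∅ ∧ X ∩ Y = ∅}

/-- The zero-divisor graph `G(P(n))` of `(P([n]), ∩)`. -/
def GP (n : ℕ) : SimpleGraph (PVtx n) where
  Adj X Y := X ≠ Y ∧ X.1 ∩ Y.1 = ∅
  symm := by
    constructor
    rintro X Y ⟨h1, h2⟩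
    exact ⟨h1.symm, by simpa [Finset.inter_comm] using h2⟩
  loopless := by constructor; rintro X ⟨h, _⟩; exact h rfl

/-!
A vertex of `G(P(n))` is a proper nonempty subset of `[n]`, so `G(P(n))` has `2 ^ n - 2`
vertices. The reduced graph of `S` has 22 vertices: the class of `(X, a)` is determined by `X`
and the annihilator of `a` in `ℤ/4ℤ`, which gives `8 * 3` candidates, minus `(∅, 0)` and the
non-zero-divisors `(univ, unit)`. Since `24` is not a power of two, no isomorphism exists.
-/

instance : DecidablePred IsVertex := fun _ => by unfold IsVertex; infer_instance

instance : DecidableRel G.Adj := fun s t => by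
  change Decidable (s ≠ t ∧ IsVertex s ∧ IsVertex t ∧ mulS s t = zeroS)
  infer_instance

instance : Fintype (Quotient nsetoid) :=
  @Quotient.fintype _ _ nsetoid fun u v =>
    decidable_of_iff (∀ w, G.Adj u.1 w ↔ G.Adj v.1 w) Set.ext_iff.symm

set_option maxRecDepth 10000 in
theorem card_quotient_nsetoid : Fintype.card (Quotient nsetoid) = 22 := by
  decide

theorem Finset.exists_ne_empty_inter_eq_empty_iff {α : Type*} [Fintype α] [DecidableEq α]
    (X : Finset α) : (∃ Y : Finset α, Y ≠ ∅ ∧ X ∩ Y = ∅) ↔ X ≠ univ := by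
  constructor
  · rintro ⟨Y, hY, hXY⟩ rfl
    exact hY (by simpa using hXY)
  · intro hX
    exact ⟨Xᶜ, by simpa [Finset.compl_eq_empty_iff] using hX, by simp⟩

theorem Fintype.card_finset_ne_empty_ne_univ (α : Type*) [Fintype α] [DecidableEq α] :
    Fintype.card {X : Finset α // X ≠ ∅ ∧ X ≠ Finset.univ} = 2 ^ Fintype.card α - 2 := by
  rcases isEmpty_or_nonempty α with hα | hα
  · simp [Finset.eq_empty_of_isEmpty]
  · have hfilter : Finset.univ.filter (fun X : Finset α => X ≠ ∅ ∧ X ≠ Finset.univ) =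
        Finset.univ \ {∅, Finset.univ} := by
      ext X; simp [not_or]
    have hpair : ({∅, Finset.univ} : Finset (Finset α)).card = 2 :=
      Finset.card_pair Finset.univ_nonempty.ne_empty.symm
    rw [Fintype.card_subtype, hfilter, Finset.card_univ_sdiff, hpair, Fintype.card_finset]

instance (n : ℕ) : Fintype (PVtx n) := by unfold PVtx; infer_instance

theorem card_pVtx (n : ℕ) : Fintype.card (PVtx n) = 2 ^ n - 2 := by
  have e : PVtx n ≃ {X : Finset (Fin n) // X ≠ ∅ ∧ X ≠ Finset.univ} :=
    Equiv.subtypeEquivRight fun X =>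
      and_congr_right' (Finset.exists_ne_empty_inter_eq_empty_iff X)
  rw [Fintype.card_congr e, Fintype.card_finset_ne_empty_ne_univ, Fintype.card_fin]

theorem stmt17 : ∀ n : ℕ, ¬ Nonempty (Gr ≃g GP n) := by
  rintro n ⟨e⟩
  have hcard := Fintype.card_congr e.toEquiv
  rw [card_quotient_nsetoid, card_pVtx] at hcard
  have hlo : 2 ^ 4 < 2 ^ n := by omega
  have hhi : 2 ^ n < 2 ^ 5 := by omega
  rw [Nat.pow_lt_pow_iff_right (by norm_num)] at hlo hhi
  omega
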